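/- Let A be a real M×N matrix with restricted isometry constants δ_m(A), and assume δ_k(A) < 1. Let x ∈ ℝ^N be s-sparse, e ∈ ℝ^M, λ > 0, let T be an index set with |T| = k, let v ∈ ℝ^N be supported on T, and let μ ∈ ℝ^N be the vector supported on T defined by μ = v + λ⁻¹·[A*(Ax + e − Av)]_T. Then ‖μ − v‖₂ ≤ ((1+δ_k(A))·√(1+δ_{s+k}(A)) / (λ·√(1−δ_k(A)))) · ‖x − v‖₂ + ((1+δ_k(A)) / (λ·√(1−δ_k(A)))) · ‖e‖₂. -/

import Mathlib

open Matrix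

/-- The Euclidean (ℓ²) norm of a vector in ℝⁿ. -/
noncomputable def norm2 {n : ℕ} (x : Fin n → ℝ) : ℝ := Real.sqrt (∑ i, x i ^ 2)

/-- `x` is `s`-sparse: it has at most `s` nonzero entries. -/
def sparse {n : ℕ} (s : ℕ) (x : Fin n → ℝ) : Prop :=
  (Finset.univ.filter fun i => x i ≠ 0).card ≤ s

/-- `restrict T x` is the vector agreeing with `x` on `T` and zero outside `T`. -/
def restrict {n : ℕ} (T : Finset (Fin n)) (x : Fin n → ℝ) : Fin n → ℝ :=
  fun i => if i ∈ T then x i else 0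

/-- The positive semidefinite square root `U * diagonal (√λ) * Uᴴ` of a positive semidefinite
matrix (the definition `Matrix.PosSemidef.sqrt` of the older Mathlib, since removed). -/
noncomputable def posSemidefSqrt {n : Type*} [Fintype n] [DecidableEq n]
    {A : Matrix n n ℝ} (hA : A.PosSemidef) : Matrix n n ℝ :=
  (hA.1.eigenvectorUnitary : Matrix n n ℝ) * diagonal ((↑) ∘ (√·) ∘ hA.1.eigenvalues) *
  (star hA.1.eigenvectorUnitary : Matrix n n ℝ)

/-- The preconditioned matrix `(AAᴴ)^{-1/2} A`, where `(AAᴴ)^{-1/2}` is the inverse of the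
positive semidefinite square root of `AAᴴ`. -/
noncomputable def precond {M N : ℕ} (A : Matrix (Fin M) (Fin N) ℝ) :
    Matrix (Fin M) (Fin N) ℝ :=
  (posSemidefSqrt (Matrix.posSemidef_self_mul_conjTranspose A))⁻¹ * A

/-- The preconditioned restricted isometry constant `γ_s(A)`: the smallest `γ ≥ 0` such that
`(1-γ)‖x‖₂² ≤ ‖(AAᴴ)^{-1/2}Ax‖₂²` for all `s`-sparse `x`. -/
noncomputable def pripConst {M N : ℕ} (A : Matrix (Fin M) (Fin N) ℝ) (s : ℕ) : ℝ :=
  sInf {γ : ℝ | 0 ≤ γ ∧ ∀ x : Fin N → ℝ, sparse s x →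
    (1 - γ) * norm2 x ^ 2 ≤ norm2 ((precond A).mulVec x) ^ 2}

/-- The restricted isometry constant `δ_s(B)`: the smallest `δ ≥ 0` such that
`(1-δ)‖x‖₂² ≤ ‖Bx‖₂² ≤ (1+δ)‖x‖₂²` for all `s`-sparse `x`. -/
noncomputable def ripConst {m n : ℕ} (B : Matrix (Fin m) (Fin n) ℝ) (s : ℕ) : ℝ :=
  sInf {δ : ℝ | 0 ≤ δ ∧ ∀ x : Fin n → ℝ, sparse s x →
    (1 - δ) * norm2 x ^ 2 ≤ norm2 (B.mulVec x) ^ 2 ∧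
      norm2 (B.mulVec x) ^ 2 ≤ (1 + δ) * norm2 x ^ 2}

/-- `θ_t(A) = δ_t((AAᴴ)⁻¹A)`. -/
noncomputable def thetaConst {M N : ℕ} (A : Matrix (Fin M) (Fin N) ℝ) (t : ℕ) : ℝ :=
  ripConst ((A * Aᴴ)⁻¹ * A) t

/-
Write `w = A(x - v) + e`, so that `μ - v = λ⁻¹ u` with `u = [Aᴴ w]_T`. Since `u` is supported on
`T`, `‖u‖² = ⟨u, Aᴴ w⟩ = ⟨A u, w⟩ ≤ ‖A u‖ ‖w‖ ≤ √(1 + δ_k) ‖u‖ ‖w‖`, hence `‖u‖ ≤ √(1 + δ_k) ‖w‖`;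
and `x - v` is `(s + k)`-sparse, so `‖w‖ ≤ √(1 + δ_{s+k}) ‖x - v‖ + ‖e‖`. Finally
`√(1 + δ_k) ≤ (1 + δ_k) / √(1 - δ_k)`.
-/

section Norm2

variable {n : ℕ}

lemma norm2_eq_norm_toLp (x : Fin n → ℝ) :
    norm2 x = ‖(WithLp.toLp 2 x : EuclideanSpace ℝ (Fin n))‖ := by
  simp [EuclideanSpace.norm_eq, norm2, sq_abs]

lemma norm2_nonneg (x : Fin n → ℝ) : 0 ≤ norm2 x := Real.sqrt_nonneg _

lemma norm2_sq (x : Fin n → ℝ) : norm2 x ^ 2 = ∑ i, x i ^ 2 :=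
  Real.sq_sqrt (by positivity)

lemma norm2_add_le (x y : Fin n → ℝ) : norm2 (x + y) ≤ norm2 x + norm2 y := by
  simpa only [norm2_eq_norm_toLp, WithLp.toLp_add] using norm_add_le _ _

lemma norm2_smul (c : ℝ) (x : Fin n → ℝ) : norm2 (c • x) = |c| * norm2 x := by
  rw [norm2_eq_norm_toLp, norm2_eq_norm_toLp, WithLp.toLp_smul, norm_smul, Real.norm_eq_abs]

lemma dotProduct_le_norm2_mul_norm2 (x y : Fin n → ℝ) : x ⬝ᵥ y ≤ norm2 x * norm2 y := by
  have h := real_inner_le_norm (WithLp.toLp 2 x : EuclideanSpace ℝ (Fin n)) (WithLp.toLp 2 y)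
  rwa [EuclideanSpace.inner_toLp_toLp, star_trivial, dotProduct_comm, ← norm2_eq_norm_toLp,
    ← norm2_eq_norm_toLp] at h

lemma norm2_restrict_sq (T : Finset (Fin n)) (y : Fin n → ℝ) :
    norm2 (restrict T y) ^ 2 = restrict T y ⬝ᵥ y := by
  rw [norm2_sq, dotProduct]
  refine Finset.sum_congr rfl fun i _ => ?_
  by_cases hi : i ∈ T <;> simp [restrict, hi, sq]

end Norm2

section Sparse

variable {n : ℕ}

lemma sparse_of_eq_zero_of_notMem {T : Finset (Fin n)} {x : Fin n → ℝ}
    (hx : ∀ i ∉ T, x i = 0) : sparse T.card x :=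
  Finset.card_le_card fun i hi => by
    by_contra hiT
    exact (Finset.mem_filter.mp hi).2 (hx i hiT)

lemma sparse_restrict (T : Finset (Fin n)) (y : Fin n → ℝ) : sparse T.card (restrict T y) :=
  sparse_of_eq_zero_of_notMem fun _ hi => if_neg hi

lemma sparse.sub {s t : ℕ} {x y : Fin n → ℝ} (hx : sparse s x) (hy : sparse t y) :
    sparse (s + t) (x - y) := by
  refine le_trans (Finset.card_le_card fun _ hi => ?_) ((Finset.card_union_le _ _).trans
    (add_le_add hx hy))
  simp only [Finset.mem_filter, Finset.mem_univ, true_and, Finset.mem_union, Pi.sub_apply] at hi ⊢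
  by_contra! h
  exact hi (by rw [h.1, h.2, sub_zero])

end Sparse

section RIP

variable {m n : ℕ} (B : Matrix (Fin m) (Fin n) ℝ) (s : ℕ)

/-- `ripConst B s` is definitionally `sInf (ripSet B s)`. -/
def ripSet : Set ℝ :=
  {δ : ℝ | 0 ≤ δ ∧ ∀ x : Fin n → ℝ, sparse s x →
    (1 - δ) * norm2 x ^ 2 ≤ norm2 (B.mulVec x) ^ 2 ∧
      norm2 (B.mulVec x) ^ 2 ≤ (1 + δ) * norm2 x ^ 2}

lemma norm2_mulVec_sq_le (x : Fin n → ℝ) :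
    norm2 (B *ᵥ x) ^ 2 ≤ (∑ i, ∑ j, B i j ^ 2) * norm2 x ^ 2 := by
  rw [norm2_sq, norm2_sq, Finset.sum_mul]
  exact Finset.sum_le_sum fun i _ => by
    simpa only [mulVec, dotProduct] using Finset.sum_mul_sq_le_sq_mul_sq _ (B i) x

lemma ripSet_nonempty : (ripSet B s).Nonempty := by
  have hC : 0 ≤ ∑ i, ∑ j, B i j ^ 2 := by positivity
  refine ⟨1 + ∑ i, ∑ j, B i j ^ 2, by linarith, fun x _ => ⟨?_, ?_⟩⟩
  · nlinarith [sq_nonneg (norm2 x), sq_nonneg (norm2 (B *ᵥ x))]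
  · nlinarith [norm2_mulVec_sq_le B x, sq_nonneg (norm2 x)]

lemma isClosed_ripSet : IsClosed (ripSet B s) := by
  simp only [ripSet, Set.ofPred_and, Set.ofPred_forall]
  refine (isClosed_le continuous_const continuous_id).inter <|
    isClosed_iInter fun x => isClosed_iInter fun _ => ?_
  exact (isClosed_le (by fun_prop) continuous_const).inter
    (isClosed_le continuous_const (by fun_prop))

lemma ripConst_mem_ripSet : ripConst B s ∈ ripSet B s :=
  (isClosed_ripSet B s).csInf_mem (ripSet_nonempty B s) ⟨0, fun _ hδ => hδ.1⟩

lemma ripConst_nonneg : 0 ≤ ripConst B s := (ripConst_mem_ripSet B s).1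

lemma norm2_mulVec_le_of_sparse {s : ℕ} {x : Fin n → ℝ} (hx : sparse s x) :
    norm2 (B *ᵥ x) ≤ √(1 + ripConst B s) * norm2 x := by
  have h := ((ripConst_mem_ripSet B s).2 x hx).2
  have hδ : 0 ≤ 1 + ripConst B s := by linarith [ripConst_nonneg B s]
  rwa [← Real.sqrt_le_sqrt_iff (mul_nonneg hδ (sq_nonneg _)), Real.sqrt_sq (norm2_nonneg _),
    Real.sqrt_mul hδ, Real.sqrt_sq (norm2_nonneg _)] at h

lemma norm2_restrict_conjTranspose_mulVec_le (T : Finset (Fin n)) (w : Fin m → ℝ) :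
    norm2 (restrict T (Bᴴ *ᵥ w)) ≤ √(1 + ripConst B T.card) * norm2 w := by
  set u := restrict T (Bᴴ *ᵥ w)
  have hu : norm2 u * norm2 u ≤ (√(1 + ripConst B T.card) * norm2 w) * norm2 u :=
    calc norm2 u * norm2 u = (B *ᵥ u) ⬝ᵥ w := by
          rw [← sq, norm2_restrict_sq, dotProduct_mulVec, vecMul_conjTranspose]
          simp only [star_trivial, u]
      _ ≤ norm2 (B *ᵥ u) * norm2 w := dotProduct_le_norm2_mul_norm2 _ _
      _ ≤ √(1 + ripConst B T.card) * norm2 u * norm2 w := by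
          gcongr
          · exact norm2_nonneg w
          · exact norm2_mulVec_le_of_sparse B (sparse_restrict T _)
      _ = (√(1 + ripConst B T.card) * norm2 w) * norm2 u := by ring
  rcases (norm2_nonneg u).eq_or_lt with h0 | h0
  · rw [← h0]; exact mul_nonneg (Real.sqrt_nonneg _) (norm2_nonneg w)
  · exact le_of_mul_le_mul_right hu h0

end RIP

lemma sqrt_one_add_le_div_sqrt_one_sub {δ : ℝ} (h0 : 0 ≤ δ) (h1 : δ < 1) :
    √(1 + δ) ≤ (1 + δ) / √(1 - δ) := by
  rw [le_div_iff₀ (Real.sqrt_pos.mpr (by linarith)), ← Real.sqrt_mul (by linarith)]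
  calc √((1 + δ) * (1 - δ)) ≤ √((1 + δ) ^ 2) := Real.sqrt_le_sqrt (by nlinarith)
    _ = 1 + δ := Real.sqrt_sq (by linarith)

theorem stmt6 {M N : ℕ} (A : Matrix (Fin M) (Fin N) ℝ)
    (s k : ℕ) (hδ : ripConst A k < 1)
    (x : Fin N → ℝ) (hx : sparse s x) (e : Fin M → ℝ)
    (lam : ℝ) (hlam : 0 < lam)
    (T : Finset (Fin N)) (hT : T.card = k)
    (v : Fin N → ℝ) (hv : ∀ i ∉ T, v i = 0)
    (μ : Fin N → ℝ)
    (hμ : μ = v + lam⁻¹ • restrict T (Aᴴ.mulVec (A.mulVec x + e - A.mulVec v))) :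
    norm2 (μ - v) ≤
      (1 + ripConst A k) * Real.sqrt (1 + ripConst A (s + k)) /
        (lam * Real.sqrt (1 - ripConst A k)) * norm2 (x - v) +
      (1 + ripConst A k) / (lam * Real.sqrt (1 - ripConst A k)) * norm2 e := by
  subst hT hμ
  have hw : A *ᵥ x + e - A *ᵥ v = A *ᵥ (x - v) + e := by rw [mulVec_sub]; abel
  have hAxv := norm2_mulVec_le_of_sparse A (hx.sub (sparse_of_eq_zero_of_notMem hv))
  have hδ' := sqrt_one_add_le_div_sqrt_one_sub (ripConst_nonneg A T.card) hδ
  rw [add_sub_cancel_left, hw, norm2_smul, abs_of_pos (inv_pos.mpr hlam)]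
  calc lam⁻¹ * norm2 (restrict T (Aᴴ *ᵥ (A *ᵥ (x - v) + e)))
      ≤ lam⁻¹ * (√(1 + ripConst A T.card) * norm2 (A *ᵥ (x - v) + e)) := by
        gcongr; exact norm2_restrict_conjTranspose_mulVec_le A T _
    _ ≤ lam⁻¹ * ((1 + ripConst A T.card) / √(1 - ripConst A T.card) *
          (√(1 + ripConst A (s + T.card)) * norm2 (x - v) + norm2 e)) := by
        gcongr lam⁻¹ * ?_
        refine mul_le_mul hδ' ?_ (norm2_nonneg _) ((Real.sqrt_nonneg _).trans hδ')
        linarith [norm2_add_le (A *ᵥ (x - v)) e]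
    _ = _ := by field_simp
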